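/- arXiv:2603.23876 — 2 statements merged into one kernel-verified Lean document; each statement's English description precedes it below -/
import Mathlib

section
/- For m ≥ 1 and positive reals a₁,…,a_m, the iterated convolution K = e^{-a₁|x|} * ⋯ * e^{-a_m|x|} is an even function on ℝ and is strongly PF(2). -/
open MeasureTheory

/-- `K : ℝ → ℝ` is strongly PF(2). -/
def StronglyPF2 (K : ℝ → ℝ) : Prop :=
  (∀ x : ℝ, 0 ≤ K x) ∧
  (∀ x₁ x₂ y₁ y₂ : ℝ, x₁ < x₂ → y₁ < y₂ →
    0 ≤ K (x₁ - y₁) * K (x₂ - y₂) - K (x₁ - y₂) * K (x₂ - y₁)) ∧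
  (0 < K 0) ∧
  ∀ x₁ x₂ : ℝ, x₁ < x₂ → 0 < K 0 * K 0 - K (x₁ - x₂) * K (x₂ - x₁)

/-- The exponential kernel `x ↦ exp (-a * |x|)`. -/
noncomputable def expKer (a : ℝ) : ℝ → ℝ := fun x => Real.exp (-a * |x|)

/-- Convolution of two functions on `ℝ`. -/
noncomputable def conv (f g : ℝ → ℝ) : ℝ → ℝ := fun x => ∫ y : ℝ, f (x - y) * g y

/-- The iterated convolution `e^{-a|x|} * e^{-a₁|x|} * ⋯ * e^{-aₖ|x|}`. -/
noncomputable def iterConv : ℝ → List ℝ → ℝ → ℝ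
  | a, [] => expKer a
  | a, b :: rest => conv (expKer a) (iterConv b rest)

section Aux

open Real Set

/-- The invariant carried through the induction. -/
structure GoodKer (K : ℝ → ℝ) : Prop where
  cont : Continuous K
  pos : ∀ x, 0 < K x
  even : ∀ x, K (-x) = K x
  integrable : Integrable K
  pf2 : ∀ x₁ x₂ y₁ y₂ : ℝ, x₁ ≤ x₂ → y₁ ≤ y₂ →
    K (x₁ - y₂) * K (x₂ - y₁) ≤ K (x₁ - y₁) * K (x₂ - y₂)
  strict : ∀ x₁ x₂ : ℝ, x₁ < x₂ → K (x₁ - x₂) * K (x₂ - x₁) < K 0 * K 0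

lemma expKer_cont (a : ℝ) : Continuous (expKer a) :=
  Real.continuous_exp.comp (continuous_const.mul continuous_abs)

lemma expKer_pos (a x : ℝ) : 0 < expKer a x := Real.exp_pos _

lemma expKer_even (a x : ℝ) : expKer a (-x) = expKer a x := by simp [expKer]

lemma expKer_le_one {a : ℝ} (ha : 0 < a) (x : ℝ) : expKer a x ≤ 1 :=
  Real.exp_le_one_iff.mpr (by nlinarith [abs_nonneg x])

lemma expKer_integrable {a : ℝ} (ha : 0 < a) : Integrable (expKer a) := by
  rw [← integrableOn_univ, ← @Iio_union_Ici _ _ (0 : ℝ), integrableOn_union,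
    integrableOn_Ici_iff_integrableOn_Ioi]
  constructor
  · rw [← (Measure.measurePreserving_neg (volume : Measure ℝ)).integrableOn_comp_preimage
      (Homeomorph.neg ℝ).measurableEmbedding]
    simp only [Function.comp_def, neg_preimage, neg_Iio, neg_neg, neg_zero]
    apply (exp_neg_integrableOn_Ioi 0 ha).congr_fun _ measurableSet_Ioi
    intro x hx
    simp [expKer, abs_neg, abs_of_pos (mem_Ioi.mp hx)]
  · apply (exp_neg_integrableOn_Ioi 0 ha).congr_fun _ measurableSet_Ioi
    intro x hx
    simp [expKer, abs_of_pos (mem_Ioi.mp hx)]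

lemma abs_ineq {x₁ x₂ y₁ y₂ : ℝ} (hx : x₁ ≤ x₂) (hy : y₁ ≤ y₂) :
    |x₁ - y₁| + |x₂ - y₂| ≤ |x₁ - y₂| + |x₂ - y₁| := by
  rcases abs_cases (x₁ - y₁) with ⟨h1, h1'⟩ | ⟨h1, h1'⟩ <;>
  rcases abs_cases (x₂ - y₂) with ⟨h2, h2'⟩ | ⟨h2, h2'⟩ <;>
  rcases abs_cases (x₁ - y₂) with ⟨h3, h3'⟩ | ⟨h3, h3'⟩ <;>
  rcases abs_cases (x₂ - y₁) with ⟨h4, h4'⟩ | ⟨h4, h4'⟩ <;>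
  linarith

lemma expKer_mul (a u v : ℝ) :
    expKer a u * expKer a v = Real.exp (-a * (|u| + |v|)) := by
  simp only [expKer, ← Real.exp_add]
  ring_nf

lemma expKer_pf2 {a : ℝ} (ha : 0 < a) {x₁ x₂ y₁ y₂ : ℝ} (hx : x₁ ≤ x₂) (hy : y₁ ≤ y₂) :
    expKer a (x₁ - y₂) * expKer a (x₂ - y₁) ≤ expKer a (x₁ - y₁) * expKer a (x₂ - y₂) := by
  rw [expKer_mul, expKer_mul, Real.exp_le_exp]
  have := abs_ineq hx hy
  nlinarith

lemma expKer_strict {a : ℝ} (ha : 0 < a) {x₁ x₂ : ℝ} (hx : x₁ < x₂) :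
    expKer a (x₁ - x₂) * expKer a (x₂ - x₁) < expKer a 0 * expKer a 0 := by
  rw [expKer_mul, expKer_mul]
  apply Real.exp_lt_exp.mpr
  have h1 : 0 < |x₁ - x₂| := abs_pos.mpr (by linarith)
  have h2 : 0 < |x₂ - x₁| := abs_pos.mpr (by linarith)
  simp only [abs_zero]
  nlinarith

lemma goodKer_expKer {a : ℝ} (ha : 0 < a) : GoodKer (expKer a) :=
  ⟨expKer_cont a, expKer_pos a, expKer_even a, expKer_integrable ha,
    fun _ _ _ _ hx hy => expKer_pf2 ha hx hy,
    fun _ _ hx => expKer_strict ha hx⟩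

variable {a : ℝ} {g : ℝ → ℝ}

lemma conv_integrand_integrable (ha : 0 < a) (hg : GoodKer g) (x y : ℝ) :
    Integrable (fun w => expKer a (x - w) * g (w - y)) := by
  refine Integrable.bdd_mul (c := 1) (hg.integrable.comp_sub_right y)
    ((expKer_cont a).comp (continuous_const.sub continuous_id)).aestronglyMeasurable
    (Filter.Eventually.of_forall fun w => ?_)
  rw [Real.norm_eq_abs, abs_of_nonneg (expKer_pos a _).le]
  exact expKer_le_one ha _

lemma conv_shift (a : ℝ) (g : ℝ → ℝ) (x y : ℝ) :
    conv (expKer a) g (x - y) = ∫ w, expKer a (x - w) * g (w - y) := by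
  show (∫ z, expKer a (x - y - z) * g z) = _
  rw [← integral_add_right_eq_self (fun w => expKer a (x - w) * g (w - y)) y]
  congr 1
  ext z
  have h1 : x - (z + y) = x - y - z := by ring
  have h2 : z + y - y = z := by ring
  rw [h1, h2]

lemma conv_pos (ha : 0 < a) (hg : GoodKer g) (x : ℝ) : 0 < conv (expKer a) g x := by
  have hi : Integrable (fun w => expKer a (x - w) * g w) := by
    simpa using conv_integrand_integrable ha hg x 0
  show 0 < ∫ w, expKer a (x - w) * g w
  rw [integral_pos_iff_support_of_nonneg
    (fun w => (mul_pos (expKer_pos a _) (hg.pos w)).le) hi]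
  have hsupp : (Function.support fun w => expKer a (x - w) * g w) = univ := by
    ext w
    simp only [Function.mem_support, mem_univ, iff_true]
    exact (mul_pos (expKer_pos a (x - w)) (hg.pos w)).ne'
  rw [hsupp, Real.volume_univ]
  exact ENNReal.zero_lt_top

lemma conv_cont (ha : 0 < a) (hg : GoodKer g) : Continuous (conv (expKer a) g) := by
  show Continuous fun x => ∫ w, expKer a (x - w) * g w
  apply continuous_of_dominated (bound := fun w => |g w|)
  · intro x
    exact (((expKer_cont a).comp (continuous_const.sub continuous_id)).mul
      hg.cont).aestronglyMeasurable
  · intro x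
    filter_upwards with w
    rw [Real.norm_eq_abs, abs_mul, abs_of_nonneg (expKer_pos a _).le]
    calc expKer a (x - w) * |g w| ≤ 1 * |g w| :=
          mul_le_mul_of_nonneg_right (expKer_le_one ha _) (abs_nonneg _)
      _ = |g w| := one_mul _
  · exact hg.integrable.abs
  · filter_upwards with w
    exact ((expKer_cont a).comp (continuous_id.sub continuous_const)).mul continuous_const

lemma conv_even (ha : 0 < a) (hg : GoodKer g) (x : ℝ) :
    conv (expKer a) g (-x) = conv (expKer a) g x := by
  show (∫ y, expKer a (-x - y) * g y) = ∫ y, expKer a (x - y) * g y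
  rw [← integral_neg_eq_self (fun y => expKer a (x - y) * g y)]
  congr 1
  ext y
  have h1 : x - -y = -(-x - y) := by ring
  rw [h1, expKer_even, hg.even]

end Aux

section Aux2
open Real Set
variable {a : ℝ} {g : ℝ → ℝ}

lemma conv_integrable (ha : 0 < a) (hg : GoodKer g) :
    Integrable (conv (expKer a) g) := by
  have heq : conv (expKer a) g
      = MeasureTheory.convolution g (expKer a) (ContinuousLinearMap.mul ℝ ℝ) volume := by
    funext x
    show (∫ y, expKer a (x - y) * g y) = _
    rw [MeasureTheory.convolution]
    congr 1
    funext t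
    simp [mul_comm]
  rw [heq]
  exact hg.integrable.integrable_convolution (ContinuousLinearMap.mul ℝ ℝ)
    (expKer_integrable ha)

lemma conv_det (ha : 0 < a) (hg : GoodKer g) (x₁ x₂ y₁ y₂ : ℝ) :
    2 * (conv (expKer a) g (x₁ - y₁) * conv (expKer a) g (x₂ - y₂)
        - conv (expKer a) g (x₁ - y₂) * conv (expKer a) g (x₂ - y₁))
      = ∫ z : ℝ × ℝ,
          (expKer a (x₁ - z.1) * expKer a (x₂ - z.2)
            - expKer a (x₁ - z.2) * expKer a (x₂ - z.1)) *
          (g (z.1 - y₁) * g (z.2 - y₂) - g (z.1 - y₂) * g (z.2 - y₁))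
          ∂((volume : Measure ℝ).prod volume) := by
  have hi11 := conv_integrand_integrable ha hg x₁ y₁
  have hi12 := conv_integrand_integrable ha hg x₁ y₂
  have hi21 := conv_integrand_integrable ha hg x₂ y₁
  have hi22 := conv_integrand_integrable ha hg x₂ y₂
  have e1 : conv (expKer a) g (x₁ - y₁) * conv (expKer a) g (x₂ - y₂)
      = ∫ z : ℝ × ℝ, (expKer a (x₁ - z.1) * g (z.1 - y₁))
          * (expKer a (x₂ - z.2) * g (z.2 - y₂)) ∂((volume : Measure ℝ).prod volume) := by
    rw [conv_shift, conv_shift, ← integral_prod_mul]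
  have e2 : conv (expKer a) g (x₁ - y₂) * conv (expKer a) g (x₂ - y₁)
      = ∫ z : ℝ × ℝ, (expKer a (x₁ - z.1) * g (z.1 - y₂))
          * (expKer a (x₂ - z.2) * g (z.2 - y₁)) ∂((volume : Measure ℝ).prod volume) := by
    rw [conv_shift, conv_shift, ← integral_prod_mul]
  have e3 : conv (expKer a) g (x₂ - y₂) * conv (expKer a) g (x₁ - y₁)
      = ∫ z : ℝ × ℝ, (expKer a (x₂ - z.1) * g (z.1 - y₂))
          * (expKer a (x₁ - z.2) * g (z.2 - y₁)) ∂((volume : Measure ℝ).prod volume) := by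
    rw [conv_shift, conv_shift, ← integral_prod_mul]
  have e4 : conv (expKer a) g (x₂ - y₁) * conv (expKer a) g (x₁ - y₂)
      = ∫ z : ℝ × ℝ, (expKer a (x₂ - z.1) * g (z.1 - y₁))
          * (expKer a (x₁ - z.2) * g (z.2 - y₂)) ∂((volume : Measure ℝ).prod volume) := by
    rw [conv_shift, conv_shift, ← integral_prod_mul]
  have key : 2 * (conv (expKer a) g (x₁ - y₁) * conv (expKer a) g (x₂ - y₂)
        - conv (expKer a) g (x₁ - y₂) * conv (expKer a) g (x₂ - y₁))
      = (conv (expKer a) g (x₁ - y₁) * conv (expKer a) g (x₂ - y₂)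
          - conv (expKer a) g (x₁ - y₂) * conv (expKer a) g (x₂ - y₁))
        + (conv (expKer a) g (x₂ - y₂) * conv (expKer a) g (x₁ - y₁)
          - conv (expKer a) g (x₂ - y₁) * conv (expKer a) g (x₁ - y₂)) := by ring
  have hA : Integrable (fun z : ℝ × ℝ =>
      expKer a (x₁ - z.1) * g (z.1 - y₁) * (expKer a (x₂ - z.2) * g (z.2 - y₂))
      - expKer a (x₁ - z.1) * g (z.1 - y₂) * (expKer a (x₂ - z.2) * g (z.2 - y₁)))
      ((volume : Measure ℝ).prod volume) := (hi11.mul_prod hi22).sub (hi12.mul_prod hi21)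
  have hB : Integrable (fun z : ℝ × ℝ =>
      expKer a (x₂ - z.1) * g (z.1 - y₂) * (expKer a (x₁ - z.2) * g (z.2 - y₁))
      - expKer a (x₂ - z.1) * g (z.1 - y₁) * (expKer a (x₁ - z.2) * g (z.2 - y₂)))
      ((volume : Measure ℝ).prod volume) := (hi22.mul_prod hi11).sub (hi21.mul_prod hi12)
  rw [key, e1, e2, e3, e4, ← integral_sub (hi11.mul_prod hi22) (hi12.mul_prod hi21),
    ← integral_sub (hi22.mul_prod hi11) (hi21.mul_prod hi12),
    ← integral_add hA hB]
  · congr 1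
    funext z
    ring
  

lemma det_integrand_nonneg (ha : 0 < a) (hg : GoodKer g) {x₁ x₂ y₁ y₂ : ℝ}
    (hx : x₁ ≤ x₂) (hy : y₁ ≤ y₂) (z : ℝ × ℝ) :
    0 ≤ (expKer a (x₁ - z.1) * expKer a (x₂ - z.2)
          - expKer a (x₁ - z.2) * expKer a (x₂ - z.1)) *
        (g (z.1 - y₁) * g (z.2 - y₂) - g (z.1 - y₂) * g (z.2 - y₁)) := by
  rcases le_total z.1 z.2 with h | h
  · have h1 := expKer_pf2 ha hx h
    have h2 := hg.pf2 z.1 z.2 y₁ y₂ h hy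
    exact mul_nonneg (sub_nonneg.2 h1) (sub_nonneg.2 h2)
  · have h1 := expKer_pf2 ha hx h
    have h2 := hg.pf2 z.2 z.1 y₁ y₂ h hy
    have h2' : g (z.1 - y₁) * g (z.2 - y₂) ≤ g (z.1 - y₂) * g (z.2 - y₁) := by
      linarith [mul_comm (g (z.2 - y₂)) (g (z.1 - y₁)), mul_comm (g (z.2 - y₁)) (g (z.1 - y₂))]
    nlinarith [sub_nonpos.2 h1, sub_nonpos.2 h2']

lemma det_integrand_integrable (ha : 0 < a) (hg : GoodKer g) (x₁ x₂ y₁ y₂ : ℝ) :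
    Integrable (fun z : ℝ × ℝ =>
        (expKer a (x₁ - z.1) * expKer a (x₂ - z.2)
          - expKer a (x₁ - z.2) * expKer a (x₂ - z.1)) *
        (g (z.1 - y₁) * g (z.2 - y₂) - g (z.1 - y₂) * g (z.2 - y₁)))
      ((volume : Measure ℝ).prod volume) := by
  have hi11 := conv_integrand_integrable ha hg x₁ y₁
  have hi12 := conv_integrand_integrable ha hg x₁ y₂
  have hi21 := conv_integrand_integrable ha hg x₂ y₁
  have hi22 := conv_integrand_integrable ha hg x₂ y₂
  have h := (((hi11.mul_prod hi22).sub (hi12.mul_prod hi21)).add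
    ((hi22.mul_prod hi11).sub (hi21.mul_prod hi12)))
  refine h.congr (Filter.Eventually.of_forall fun z => ?_)
  simp only [Pi.add_apply, Pi.sub_apply]
  ring

lemma det_integrand_continuous (ha : 0 < a) (hg : GoodKer g) (x₁ x₂ y₁ y₂ : ℝ) :
    Continuous (fun z : ℝ × ℝ =>
        (expKer a (x₁ - z.1) * expKer a (x₂ - z.2)
          - expKer a (x₁ - z.2) * expKer a (x₂ - z.1)) *
        (g (z.1 - y₁) * g (z.2 - y₂) - g (z.1 - y₂) * g (z.2 - y₁))) := by
  have c1 : Continuous fun z : ℝ × ℝ => expKer a (x₁ - z.1) :=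
    (expKer_cont a).comp (continuous_const.sub continuous_fst)
  have c2 : Continuous fun z : ℝ × ℝ => expKer a (x₂ - z.2) :=
    (expKer_cont a).comp (continuous_const.sub continuous_snd)
  have c3 : Continuous fun z : ℝ × ℝ => expKer a (x₁ - z.2) :=
    (expKer_cont a).comp (continuous_const.sub continuous_snd)
  have c4 : Continuous fun z : ℝ × ℝ => expKer a (x₂ - z.1) :=
    (expKer_cont a).comp (continuous_const.sub continuous_fst)
  have d1 : Continuous fun z : ℝ × ℝ => g (z.1 - y₁) :=
    hg.cont.comp (continuous_fst.sub continuous_const)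
  have d2 : Continuous fun z : ℝ × ℝ => g (z.2 - y₂) :=
    hg.cont.comp (continuous_snd.sub continuous_const)
  have d3 : Continuous fun z : ℝ × ℝ => g (z.1 - y₂) :=
    hg.cont.comp (continuous_fst.sub continuous_const)
  have d4 : Continuous fun z : ℝ × ℝ => g (z.2 - y₁) :=
    hg.cont.comp (continuous_snd.sub continuous_const)
  exact ((c1.mul c2).sub (c3.mul c4)).mul ((d1.mul d2).sub (d3.mul d4))

lemma goodKer_conv (ha : 0 < a) (hg : GoodKer g) : GoodKer (conv (expKer a) g) := by
  refine ⟨conv_cont ha hg, conv_pos ha hg, conv_even ha hg, conv_integrable ha hg, ?_, ?_⟩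
  · intro x₁ x₂ y₁ y₂ hx hy
    have h2 := conv_det ha hg x₁ x₂ y₁ y₂
    have h3 : 0 ≤ ∫ z : ℝ × ℝ,
          (expKer a (x₁ - z.1) * expKer a (x₂ - z.2)
            - expKer a (x₁ - z.2) * expKer a (x₂ - z.1)) *
          (g (z.1 - y₁) * g (z.2 - y₂) - g (z.1 - y₂) * g (z.2 - y₁))
          ∂((volume : Measure ℝ).prod volume) :=
      integral_nonneg (det_integrand_nonneg ha hg hx hy)
    linarith
  · intro x₁ x₂ hx
    have h2 := conv_det ha hg x₁ x₂ x₁ x₂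
    simp only [sub_self] at h2
    have hpos : 0 < ∫ z : ℝ × ℝ,
        (expKer a (x₁ - z.1) * expKer a (x₂ - z.2)
          - expKer a (x₁ - z.2) * expKer a (x₂ - z.1)) *
        (g (z.1 - x₁) * g (z.2 - x₂) - g (z.1 - x₂) * g (z.2 - x₁))
        ∂((volume : Measure ℝ).prod volume) := by
      rw [integral_pos_iff_support_of_nonneg
        (fun z => det_integrand_nonneg ha hg hx.le hx.le z)
        (det_integrand_integrable ha hg x₁ x₂ x₁ x₂)]
      have hopen : IsOpen {z : ℝ × ℝ | 0 <
          (expKer a (x₁ - z.1) * expKer a (x₂ - z.2)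
            - expKer a (x₁ - z.2) * expKer a (x₂ - z.1)) *
          (g (z.1 - x₁) * g (z.2 - x₂) - g (z.1 - x₂) * g (z.2 - x₁))} :=
        isOpen_lt continuous_const (det_integrand_continuous ha hg x₁ x₂ x₁ x₂)
      have hmem : (x₁, x₂) ∈ {z : ℝ × ℝ | 0 <
          (expKer a (x₁ - z.1) * expKer a (x₂ - z.2)
            - expKer a (x₁ - z.2) * expKer a (x₂ - z.1)) *
          (g (z.1 - x₁) * g (z.2 - x₂) - g (z.1 - x₂) * g (z.2 - x₁))} := by
        simp only [mem_setOf_eq, sub_self]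
        exact mul_pos (sub_pos.2 (expKer_strict ha hx)) (sub_pos.2 (hg.strict x₁ x₂ hx))
      calc (0 : ENNReal) < ((volume : Measure ℝ).prod volume) {z : ℝ × ℝ | 0 <
            (expKer a (x₁ - z.1) * expKer a (x₂ - z.2)
              - expKer a (x₁ - z.2) * expKer a (x₂ - z.1)) *
            (g (z.1 - x₁) * g (z.2 - x₂) - g (z.1 - x₂) * g (z.2 - x₁))} :=
            hopen.measure_pos _ ⟨(x₁, x₂), hmem⟩
        _ ≤ _ := measure_mono (fun z hz => ne_of_gt hz)
    linarith

lemma goodKer_iterConv (a : ℝ) (l : List ℝ) (ha : 0 < a) (hl : ∀ b ∈ l, 0 < b) :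
    GoodKer (iterConv a l) := by
  induction l generalizing a with
  | nil => exact goodKer_expKer ha
  | cons b rest ih =>
    exact goodKer_conv ha (ih b (hl b List.mem_cons_self) (fun c hc => hl c (List.mem_cons_of_mem _ hc)))

end Aux2

/-- For `m ≥ 1` and positive reals `a₁, …, a_m`, the iterated convolution
`e^{-a₁|x|} * ⋯ * e^{-a_m|x|}` is even and strongly PF(2). -/
theorem iterConv_even_stronglyPF2 (a : ℝ) (l : List ℝ)
    (ha : 0 < a) (hl : ∀ b ∈ l, 0 < b) :
    (∀ x : ℝ, iterConv a l (-x) = iterConv a l x) ∧ StronglyPF2 (iterConv a l) := by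
  have hG := goodKer_iterConv a l ha hl
  refine ⟨hG.even, fun x => (hG.pos x).le, ?_, hG.pos 0, ?_⟩
  · intro x₁ x₂ y₁ y₂ hx hy
    exact sub_nonneg.2 (hG.pf2 x₁ x₂ y₁ y₂ hx.le hy.le)
  · intro x₁ x₂ hx
    exact sub_pos.2 (hG.strict x₁ x₂ hx)
end

section
/- For nonzero real σ, τ with τ > 0, the kernel K(x) = (1/(4σ(σ²+τ²))) e^{-τ|x|} ( sin(σx)·sign(x) + (σ/τ) cos(σx) ) takes negative values somewhere on ℝ; in particular K is not strongly PF(2). -/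
/-- For nonzero `σ` and `τ > 0`, the oscillatory kernel
`K x = (1/(4σ(σ²+τ²))) e^{-τ|x|} (sin(σx) sign x + (σ/τ) cos(σx))` takes negative
values somewhere on `ℝ`; in particular it is not strongly PF(2). -/
theorem oscillatory_kernel_not_stronglyPF2 (σ τ : ℝ) (hσ : σ ≠ 0) (hτ : 0 < τ)
    (K : ℝ → ℝ)
    (hK : ∀ x : ℝ, K x = 1 / (4 * σ * (σ ^ 2 + τ ^ 2)) * Real.exp (-τ * |x|) *
      (Real.sin (σ * x) * Real.sign x + σ / τ * Real.cos (σ * x))) :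
    (∃ x : ℝ, K x < 0) ∧ ¬ StronglyPF2 K := by
  have hneg : K (Real.pi / σ) < 0 := by
    have h1 : σ * (Real.pi / σ) = Real.pi := by field_simp
    have hval := hK (Real.pi / σ)
    rw [h1, Real.sin_pi, Real.cos_pi] at hval
    set E := Real.exp (-τ * |Real.pi / σ|) with hE
    have hEpos : 0 < E := Real.exp_pos _
    have hsum : 0 < σ ^ 2 + τ ^ 2 := by positivity
    have : K (Real.pi / σ) = -(E / (4 * (σ ^ 2 + τ ^ 2) * τ)) := by
      rw [hval]; field_simp; ring
    rw [this]
    have : 0 < E / (4 * (σ ^ 2 + τ ^ 2) * τ) := by positivity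
    linarith
  exact ⟨⟨_, hneg⟩, fun h => absurd (h.1 (Real.pi / σ)) (not_le.mpr hneg)⟩
end
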